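/- arXiv:0711.2400 — 2 statements merged into one kernel-verified Lean document; each statement's English description precedes it below -/
import Mathlib

section
/- Let Ω be a set and C a nonempty collection of subsets of Ω, and let F = σ(C). If for every A ∈ C the complement A^c belongs to κ(C), then for every ω ∈ Ω the atom of F containing ω equals the intersection of all members of C containing ω: A_F(ω) = A_C(ω). -/
/-!
For points `ω, ω'`, the sets `B` with `ω ∈ B → ω' ∈ B` form a κ class. So if every member of `C`
containing `ω` contains `ω'`, the same holds for every member of `κ(C)`; applied to the complements
`Aᶜ ∈ κ(C)` of `A ∈ C` this gives the converse implication, so `ω` and `ω'` lie in exactly the same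
members of `C`. The sets that do not separate `ω` from `ω'` form a σ-algebra, hence contain `σ(C)`.
Similarly `Aᶜ ⊆ ⋃₀ C` because `{B | B ⊆ ⋃₀ C}` is a κ class, so `C` covers `Ω` and `A_C(ω)` is never
the empty-set convention.
-/

open MeasureTheory Classical

variable {Ω : Type*}

/-- The intersection of all members of `C` containing `ω`, with the convention
that it is `∅` when no member of `C` contains `ω`. -/
noncomputable def atomOf (C : Set (Set Ω)) (ω : Ω) : Set Ω :=
  if ∃ B ∈ C, ω ∈ B then ⋂₀ {B | B ∈ C ∧ ω ∈ B} else ∅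

/-- `C_σ` : the collection of all countable unions of members of `C`. -/
def sigmaUnions (C : Set (Set Ω)) : Set (Set Ω) :=
  {A | ∃ f : ℕ → Set Ω, (∀ n, f n ∈ C) ∧ A = ⋃ n, f n}

/-- `C_σδ` : the collection of all countable intersections of members of `C_σ`. -/
def sigmaDelta (C : Set (Set Ω)) : Set (Set Ω) :=
  {A | ∃ f : ℕ → Set Ω, (∀ n, f n ∈ sigmaUnions C) ∧ A = ⋂ n, f n}

/-- A κ class: closed under countable (nonempty) unions and intersections. -/
def IsKappaClass (K : Set (Set Ω)) : Prop :=
  (∀ f : ℕ → Set Ω, (∀ n, f n ∈ K) → (⋃ n, f n) ∈ K) ∧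
  (∀ f : ℕ → Set Ω, (∀ n, f n ∈ K) → (⋂ n, f n) ∈ K)

/-- `κ(C)` : the smallest κ class containing `C`. -/
def kappa (C : Set (Set Ω)) : Set (Set Ω) :=
  ⋂₀ {K | IsKappaClass K ∧ C ⊆ K}

/-- `σ(C)` viewed as the collection of its measurable sets. -/
def sigmaSets (C : Set (Set Ω)) : Set (Set Ω) :=
  {s | MeasurableSet[MeasurableSpace.generateFrom C] s}

section

variable {C : Set (Set Ω)}

theorem mem_atomOf_iff {ω : Ω} (hω : ∃ B ∈ C, ω ∈ B) {ω' : Ω} :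
    ω' ∈ atomOf C ω ↔ ∀ B ∈ C, ω ∈ B → ω' ∈ B := by
  simp only [atomOf, if_pos hω, Set.mem_sInter, Set.mem_ofPred_eq, and_imp]

theorem subset_sigmaSets : C ⊆ sigmaSets C :=
  fun _ ↦ MeasurableSpace.measurableSet_generateFrom

theorem kappa_subset {K : Set (Set Ω)} (hK : IsKappaClass K) (hCK : C ⊆ K) : kappa C ⊆ K :=
  Set.sInter_subset_of_mem ⟨hK, hCK⟩

theorem isKappaClass_setOf_subset (S : Set Ω) : IsKappaClass {B | B ⊆ S} :=
  ⟨fun _ hf ↦ Set.iUnion_subset hf, fun f hf ↦ (Set.iInter_subset f 0).trans (hf 0)⟩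

theorem isKappaClass_setOf_mem_imp (ω ω' : Ω) : IsKappaClass {B | ω ∈ B → ω' ∈ B} := by
  refine ⟨fun f hf hω ↦ ?_, fun f hf hω ↦ Set.mem_iInter.2 fun n ↦ hf n (Set.mem_iInter.1 hω n)⟩
  obtain ⟨n, hn⟩ := Set.mem_iUnion.1 hω
  exact Set.mem_iUnion.2 ⟨n, hf n hn⟩

theorem kappa_subset_setOf_subset_sUnion : kappa C ⊆ {B | B ⊆ ⋃₀ C} :=
  kappa_subset (isKappaClass_setOf_subset _) fun _ ↦ Set.subset_sUnion_of_mem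

theorem kappa_subset_setOf_mem_imp {ω ω' : Ω} (h : ∀ A ∈ C, ω ∈ A → ω' ∈ A) :
    kappa C ⊆ {B | ω ∈ B → ω' ∈ B} :=
  kappa_subset (isKappaClass_setOf_mem_imp ω ω') h

theorem sUnion_eq_univ_of_compl_mem_kappa (hC : C.Nonempty) (h : ∀ A ∈ C, Aᶜ ∈ kappa C) :
    ⋃₀ C = Set.univ := by
  obtain ⟨A, hA⟩ := hC
  refine Set.eq_univ_of_forall fun x ↦ ?_
  by_cases hx : x ∈ A
  · exact ⟨A, hA, hx⟩
  · exact kappa_subset_setOf_subset_sUnion (h A hA) hx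

theorem mem_iff_of_compl_mem_kappa (h : ∀ A ∈ C, Aᶜ ∈ kappa C) {ω ω' : Ω}
    (hωω' : ∀ A ∈ C, ω ∈ A → ω' ∈ A) {A : Set Ω} (hA : A ∈ C) : ω ∈ A ↔ ω' ∈ A :=
  ⟨hωω' A hA, fun hω'A ↦ by_contra fun hωA ↦
    kappa_subset_setOf_mem_imp hωω' (h A hA) hωA hω'A⟩

theorem mem_iff_of_mem_sigmaSets {ω ω' : Ω} (h : ∀ A ∈ C, ω ∈ A ↔ ω' ∈ A) {s : Set Ω}
    (hs : s ∈ sigmaSets C) : ω ∈ s ↔ ω' ∈ s := by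
  induction s, hs using MeasurableSpace.generateFrom_induction with
  | hC t ht => exact h t ht
  | empty => exact Iff.rfl
  | compl t _ ht => exact not_congr ht
  | iUnion f _ hf => simpa only [Set.mem_iUnion] using exists_congr hf

end

theorem atom_eq_of_compl_mem_kappa (C : Set (Set Ω)) (hC : C.Nonempty)
    (h : ∀ A ∈ C, Aᶜ ∈ kappa C) (ω : Ω) :
    atomOf (sigmaSets C) ω = atomOf C ω := by
  have hωC : ∃ B ∈ C, ω ∈ B :=
    Set.mem_sUnion.1 (sUnion_eq_univ_of_compl_mem_kappa hC h ▸ Set.mem_univ ω)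
  have hωσ : ∃ B ∈ sigmaSets C, ω ∈ B :=
    ⟨Set.univ, MeasurableSet.univ (m := MeasurableSpace.generateFrom C), Set.mem_univ ω⟩
  ext ω'
  rw [mem_atomOf_iff hωσ, mem_atomOf_iff hωC]
  refine ⟨fun hσ B hB ↦ hσ B (subset_sigmaSets hB), fun hC' s hs hωs ↦ ?_⟩
  exact (mem_iff_of_mem_sigmaSets (fun _ ↦ mem_iff_of_compl_mem_kappa h hC') hs).1 hωs
end

section
/- Let Ω be a set and C a set semi-ring on Ω such that Ω is a countable union of members of C (i.e., Ω ∈ C_σ), and let F = σ(C). Then for every ω ∈ Ω, the atom of F containing ω equals the intersection of all members of C containing ω: A_F(ω) = A_C(ω). -/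
open MeasureTheory Classical

variable {Ω : Type*}

/-!
The semiring property shows that the atom `A = A_C(ω)` is disjoint from every member of `C`
missing `ω`: if `ω ∈ S ∈ C` and `ω ∉ B ∈ C`, then `ω` lies in one of the finitely many pieces
of `S \ B`, each in `C`, so `A ⊆ S \ B`. Hence every member of `C` contains `A` or is disjoint
from it. Such sets form a σ-algebra, so the same holds for every set of `σ(C)`, and
`A_F(ω) = A`.
-/

theorem atomOf_eq_sInter {C : Set (Set Ω)} {ω : Ω} (h : ∃ B ∈ C, ω ∈ B) :
    atomOf C ω = ⋂₀ {B | B ∈ C ∧ ω ∈ B} :=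
  if_pos h

theorem atomOf_subset {C : Set (Set Ω)} {ω : Ω} {B : Set Ω} (hB : B ∈ C) (hωB : ω ∈ B) :
    atomOf C ω ⊆ B := by
  rw [atomOf_eq_sInter ⟨B, hB, hωB⟩]
  exact Set.sInter_subset_of_mem ⟨hB, hωB⟩

theorem mem_atomOf_self {C : Set (Set Ω)} {ω : Ω} (h : ∃ B ∈ C, ω ∈ B) : ω ∈ atomOf C ω := by
  rw [atomOf_eq_sInter h]
  exact fun B hB => hB.2

theorem atomOf_anti {C D : Set (Set Ω)} (hCD : C ⊆ D) {ω : Ω} (h : ∃ B ∈ C, ω ∈ B) :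
    atomOf D ω ⊆ atomOf C ω := by
  obtain ⟨S, hS, hωS⟩ := h
  rw [atomOf_eq_sInter ⟨S, hS, hωS⟩, atomOf_eq_sInter ⟨S, hCD hS, hωS⟩]
  exact Set.sInter_subset_sInter fun B hB => ⟨hCD hB.1, hB.2⟩

theorem MeasureTheory.IsSetSemiring.atomOf_subset_compl {C : Set (Set Ω)} (hC : IsSetSemiring C) {ω : Ω}
    {S B : Set Ω} (hS : S ∈ C) (hωS : ω ∈ S) (hB : B ∈ C) (hωB : ω ∉ B) :
    atomOf C ω ⊆ Bᶜ := by
  obtain ⟨I, hIC, -, hdiff⟩ := hC.sdiff_eq_sUnion' S hS B hB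
  obtain ⟨D, hDI, hωD⟩ : ω ∈ ⋃₀ (I : Set (Set Ω)) := hdiff ▸ ⟨hωS, hωB⟩
  calc atomOf C ω ⊆ D := atomOf_subset (hIC hDI) hωD
    _ ⊆ S \ B := hdiff ▸ Set.subset_sUnion_of_mem hDI
    _ ⊆ Bᶜ := Set.sdiff_subset_compl S B

abbrev MeasurableSpace.notSplitting (A : Set Ω) : MeasurableSpace Ω where
  MeasurableSet' B := A ⊆ B ∨ A ⊆ Bᶜ
  measurableSet_empty := Or.inr fun _ _ h => h
  measurableSet_compl B hB := by rwa [compl_compl, or_comm]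
  measurableSet_iUnion g hg := by
    by_cases h : ∃ n, A ⊆ g n
    · obtain ⟨n, hn⟩ := h
      exact Or.inl (hn.trans (Set.subset_iUnion g n))
    · simp only [not_exists] at h
      rw [Set.compl_iUnion]
      exact Or.inr (Set.subset_iInter fun n => (hg n).resolve_left (h n))

theorem atomOf_sigmaSets_eq {C : Set (Set Ω)} {ω : Ω} (h : ∃ B ∈ C, ω ∈ B)
    (hsplit : ∀ B ∈ C, atomOf C ω ⊆ B ∨ atomOf C ω ⊆ Bᶜ) :
    atomOf (sigmaSets C) ω = atomOf C ω := by
  refine (atomOf_anti (fun B => MeasurableSpace.measurableSet_generateFrom) h).antisymm ?_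
  have hle : MeasurableSpace.generateFrom C ≤ MeasurableSpace.notSplitting (atomOf C ω) :=
    MeasurableSpace.generateFrom_le hsplit
  obtain ⟨S, hS, hωS⟩ := h
  rw [atomOf_eq_sInter ⟨S, MeasurableSpace.measurableSet_generateFrom hS, hωS⟩]
  refine Set.subset_sInter fun B ⟨hB, hωB⟩ => (hle B hB).resolve_right fun hAB => ?_
  exact hAB (mem_atomOf_self ⟨S, hS, hωS⟩) hωB

theorem atom_eq_of_semiring_univ_sigma (C : Set (Set Ω)) (hC : IsSetSemiring C)
    (hΩ : (Set.univ : Set Ω) ∈ sigmaUnions C) (ω : Ω) :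
    atomOf (sigmaSets C) ω = atomOf C ω := by
  obtain ⟨f, hf, hfu⟩ := hΩ
  obtain ⟨n, hωn⟩ := Set.mem_iUnion.mp (hfu ▸ Set.mem_univ ω)
  refine atomOf_sigmaSets_eq ⟨f n, hf n, hωn⟩ fun B hB => ?_
  by_cases hωB : ω ∈ B
  · exact Or.inl (atomOf_subset hB hωB)
  · exact Or.inr (hC.atomOf_subset_compl (hf n) hωn hB hωB)
end
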